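/- Let g : Ω → ℝ be measurable, let ε > 0, let α > 0, and let 1 ≤ k ≤ n be integers. Then μ{ max_{1 ≤ j ≤ n} |g − g ∘ T^j| > ε n^α } ≤ 2(⌊n/k⌋ + 1) · μ{ |g| > ε n^α/4 } + 2(⌊n/k⌋ + 1) · μ{ M*(g − g∘T) > ε n^α/(2k) }. -/

import Mathlib

/-! Split `j ≤ n` as `j = k q + r` with `q ≤ n / k` and `r < k`. Telescoping gives
`g - g ∘ T^j = (g - g ∘ T^{kq}) + S_r(g - g ∘ T) ∘ T^{kq}`, and `|S_r(h)| ≤ r M*(h) ≤ k M*(h)`.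
So if `|g ∘ T^j - g| > c` for some `j ≤ n`, then one of the `n / k + 1` points `T^{kq} ω` has
`|g| > c / 4` or `M*(g - g ∘ T) > c / (2k)`; each of these events has the measure of its
`T^{kq}`-preimage, since `T` preserves `μ`. -/

open MeasureTheory Filter Topology
open scoped ENNReal NNReal

noncomputable section

/-- Birkhoff sums `S_N(h) = ∑_{j=0}^{N-1} h ∘ T^j`. -/
def partialSumT {Ω : Type*} (T : Ω → Ω) (h : Ω → ℝ) (n : ℕ) (ω : Ω) : ℝ :=
  ∑ j ∈ Finset.range n, h (T^[j] ω)

/-- The maximal function `M*(h) = sup_{N ≥ 1} |S_N(h)|/N` (with values in `ℝ≥0∞`). -/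
def maxFn {Ω : Type*} (T : Ω → Ω) (h : Ω → ℝ) (ω : Ω) : ℝ≥0∞ :=
  ⨆ N : ℕ, (‖partialSumT T h (N + 1) ω‖₊ : ℝ≥0∞) / (N + 1)

section

variable {Ω : Type*} (T : Ω → Ω)

theorem partialSumT_sub_comp (g : Ω → ℝ) (r : ℕ) (ω : Ω) :
    partialSumT T (fun x => g x - g (T x)) r ω = g ω - g (T^[r] ω) := by
  simp only [partialSumT, ← Function.iterate_succ_apply' T]
  exact Finset.sum_range_sub' (fun i => g (T^[i] ω)) r

theorem abs_partialSumT_le_of_maxFn_le {h : Ω → ℝ} {ω : Ω} {b : ℝ} (hb : 0 ≤ b)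
    (hM : maxFn T h ω ≤ ENNReal.ofReal b) (r : ℕ) : |partialSumT T h r ω| ≤ r * b := by
  rcases r with _ | N
  · simp [partialSumT]
  have hN : (0 : ℝ) < N + 1 := by positivity
  have hterm : ENNReal.ofReal (|partialSumT T h (N + 1) ω| / (N + 1)) ≤ ENNReal.ofReal b := by
    refine le_trans (le_of_eq ?_) ((le_iSup _ N).trans hM)
    rw [ENNReal.ofReal_div_of_pos hN, ← Real.enorm_eq_ofReal_abs, enorm_eq_nnnorm]
    norm_cast
  rw [ENNReal.ofReal_le_ofReal_iff hb, div_le_iff₀ hN] at hterm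
  push_cast
  linarith

theorem abs_sub_iterate_le_of_maxFn_le {g : Ω → ℝ} {ω : Ω} {c : ℝ} {k : ℕ} (m : ℕ)
    {r : ℕ} (hr : r ≤ k) (hω : |g ω| ≤ c / 4) (hm : |g (T^[m] ω)| ≤ c / 4)
    (hM : maxFn T (fun x => g x - g (T x)) (T^[m] ω) ≤ ENNReal.ofReal (c / (2 * k))) :
    |g ω - g (T^[r + m] ω)| ≤ c := by
  have hc : 0 ≤ c := by linarith [abs_nonneg (g ω)]
  have hsplit : g ω - g (T^[r + m] ω)
      = (g ω - g (T^[m] ω)) + partialSumT T (fun x => g x - g (T x)) r (T^[m] ω) := by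
    rw [partialSumT_sub_comp, Function.iterate_add_apply]
    ring
  have hS := abs_partialSumT_le_of_maxFn_le T (by positivity) hM r
  have hrk : (r : ℝ) * (c / (2 * k)) ≤ c / 2 := by
    rcases Nat.eq_zero_or_pos k with rfl | hk
    · simp only [Nat.cast_zero, mul_zero, div_zero]
      linarith
    · calc (r : ℝ) * (c / (2 * k)) ≤ k * (c / (2 * k)) := by gcongr
        _ = c / 2 := by field_simp
  rw [hsplit]
  calc _ ≤ |g ω| + |g (T^[m] ω)| + |partialSumT T (fun x => g x - g (T x)) r (T^[m] ω)| :=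
        (abs_add_le _ _).trans (by gcongr; exact abs_sub _ _)
    _ ≤ c := by linarith

theorem setOf_lt_sup_nnnorm_sub_iterate_subset_iUnion (g : Ω → ℝ) (c : ℝ) {k : ℕ} (hk : 0 < k) (n : ℕ) :
    {ω | c < (((Finset.Icc 1 n).sup fun j => ‖g ω - g (T^[j] ω)‖₊ : ℝ≥0) : ℝ)} ⊆
      ⋃ q ∈ Finset.range (n / k + 1), T^[k * q] ⁻¹' ({x | c / 4 < |g x|} ∪
        {x | ENNReal.ofReal (c / (2 * k)) < maxFn T (fun x => g x - g (T x)) x}) := by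
  rintro ω (hω : c < _)
  by_contra hnot
  simp only [Set.mem_iUnion, Finset.mem_range, Set.mem_preimage, Set.mem_union,
    Set.mem_ofPred_eq, not_exists, not_or, not_lt] at hnot
  have hω0 : |g ω| ≤ c / 4 := by simpa using (hnot 0 (Nat.succ_pos _)).1
  have hc : 0 ≤ c := by linarith [abs_nonneg (g ω)]
  refine hω.not_ge ?_
  rw [← Real.coe_toNNReal c hc, NNReal.coe_le_coe]
  refine Finset.sup_le fun j hj => ?_
  rw [← NNReal.coe_le_coe, coe_nnnorm, Real.norm_eq_abs, Real.coe_toNNReal c hc,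
    ← Nat.mod_add_div j k]
  have hq : j / k < n / k + 1 := Nat.lt_succ_of_le (Nat.div_le_div_right (Finset.mem_Icc.mp hj).2)
  exact abs_sub_iterate_le_of_maxFn_le T _ (Nat.mod_lt j hk).le hω0
    (hnot _ hq).1 (hnot _ hq).2

end

theorem MeasureTheory.MeasurePreserving.measure_preimage_iterate_equiv {Ω : Type*}
    [MeasurableSpace Ω] {μ : Measure Ω} {T : Ω ≃ᵐ Ω} (hT : MeasurePreserving T μ μ) (m : ℕ)
    (s : Set Ω) : μ (T^[m] ⁻¹' s) = μ s := by
  induction m with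
  | zero => rfl
  | succ m ih => rw [Function.iterate_succ, Set.preimage_comp, hT.measure_preimage_equiv, ih]

theorem stmt16_general {Ω : Type*} [MeasurableSpace Ω] (μ : Measure Ω)
    (T : Ω ≃ᵐ Ω) (hT : MeasurePreserving (⇑T) μ μ)
    (g : Ω → ℝ)
    (ε : ℝ) (α : ℝ)
    (k n : ℕ) (hk : 1 ≤ k) :
    μ {ω | ε * (n : ℝ) ^ α <
        ((((Finset.Icc 1 n).sup fun j => ‖g ω - g ((⇑T)^[j] ω)‖₊ : ℝ≥0)) : ℝ)} ≤
      2 * ((n / k : ℕ) + 1 : ℝ≥0∞) * μ {ω | ε * (n : ℝ) ^ α / 4 < |g ω|} +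
      2 * ((n / k : ℕ) + 1 : ℝ≥0∞) *
        μ {ω | ENNReal.ofReal (ε * (n : ℝ) ^ α / (2 * k)) <
          maxFn (⇑T) (fun x => g x - g (T x)) ω} := by
  set c := ε * (n : ℝ) ^ α
  set A := {ω | c / 4 < |g ω|}
  set B := {ω | ENNReal.ofReal (c / (2 * k)) < maxFn (⇑T) (fun x => g x - g (T x)) ω}
  calc _ ≤ μ (⋃ q ∈ Finset.range (n / k + 1), (⇑T)^[k * q] ⁻¹' (A ∪ B)) :=
        measure_mono (setOf_lt_sup_nnnorm_sub_iterate_subset_iUnion T g c hk n)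
    _ ≤ ∑ q ∈ Finset.range (n / k + 1), μ ((⇑T)^[k * q] ⁻¹' (A ∪ B)) :=
        measure_biUnion_finset_le _ _
    _ = ((n / k : ℕ) + 1 : ℝ≥0∞) * μ (A ∪ B) := by
        simp only [hT.measure_preimage_iterate_equiv, Finset.sum_const, Finset.card_range,
          nsmul_eq_mul, Nat.cast_add, Nat.cast_one]
    _ ≤ ((n / k : ℕ) + 1 : ℝ≥0∞) * (μ A + μ B) := by gcongr; exact measure_union_le A B
    _ ≤ _ := by
        rw [mul_add]
        gcongr <;> exact le_mul_of_one_le_left zero_le one_le_two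

/-- **Inequality (3.40)**: for `1 ≤ k ≤ n`, `ε > 0` and `α > 0`,
`μ{max_{1≤j≤n} |g - g∘T^j| > εn^α} ≤ 2(⌊n/k⌋+1)(μ{|g| > εn^α/4} + μ{M*(g-g∘T) > εn^α/(2k)})`. -/
theorem stmt16 {Ω : Type*} [MeasurableSpace Ω] (μ : Measure Ω) [IsProbabilityMeasure μ]
    (T : Ω ≃ᵐ Ω) (hT : MeasurePreserving (⇑T) μ μ)
    (g : Ω → ℝ) (hg : Measurable g)
    (ε : ℝ) (hε : 0 < ε) (α : ℝ) (hα : 0 < α)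
    (k n : ℕ) (hk : 1 ≤ k) (hkn : k ≤ n) :
    μ {ω | ε * (n : ℝ) ^ α <
        ((((Finset.Icc 1 n).sup fun j => ‖g ω - g ((⇑T)^[j] ω)‖₊ : ℝ≥0)) : ℝ)} ≤
      2 * ((n / k : ℕ) + 1 : ℝ≥0∞) * μ {ω | ε * (n : ℝ) ^ α / 4 < |g ω|} +
      2 * ((n / k : ℕ) + 1 : ℝ≥0∞) *
        μ {ω | ENNReal.ofReal (ε * (n : ℝ) ^ α / (2 * k)) <
          maxFn (⇑T) (fun x => g x - g (T x)) ω} :=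
  stmt16_general μ T hT g ε α k n hk
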